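/- At the first slot s_p of every period p, the AoI under the auxiliary algorithm η̂ equals the AoI under the optimal algorithm π* for every source m: h^η̂_m(s_p) = h^{π*}_m(s_p). -/

import Mathlib

open MeasureTheory ProbabilityTheory

namespace AgingBandits

/-! ### System model

A single-hop wireless network with `M` sources, `N` unreliable ON/OFF channels and one
destination, evolving in discrete slots `t = 1, 2, …`.  At the beginning of each slot each
source independently generates a packet with probability `lam`; each source keeps only its
freshest undelivered packet.  In each slot the learning algorithm selects one source and one
channel; the selected source's packet (or a dummy packet if its queue is empty) is delivered
iff the selected channel is ON.  Channel states are coupled through a single i.i.d. uniform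
sequence `U`: channel `n` is ON in slot `t` iff `U t ≤ mu n`. -/

/-- The observation available to the source policy in a slot: the packet generations of the
slot, the current AoI of every source, and the generation times of the packets currently
waiting in the sources' queues (after the generations of the slot). -/
structure SrcObs (M : ℕ) where
  arr : Fin M → Bool
  age : Fin M → ℕ
  queue : Fin M → Option ℕ

/-- A source policy: maps the source history `H_A(t) = {a(1), h(1), …, a(t), h(t)}`
(together with the generation times of the queued packets) to the source selected in slot
`t`. -/
def SourcePolicy (M : ℕ) : Type := List (SrcObs M) → Fin M

/-- A queue-independent channel policy: maps the channel history
`H_B(t) = {n(1), b(1), …, n(t-1), b(t-1)}` of previously selected channels and observed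
channel states, together with a fresh uniform random seed (allowing randomized policies),
to the channel selected in slot `t`. -/
def ChannelPolicy (N : ℕ) : Type := List (Fin N × Bool) → ℝ → Fin N

/-- A queue-dependent channel policy: additionally observes, for each past slot and for the
current slot, whether the system was empty (no undelivered data packet in any queue). -/
def QChannelPolicy (N : ℕ) : Type := List (Fin N × Bool × Bool) → Bool → ℝ → Fin N

/-- A queue-independent channel policy regarded as a (degenerate) queue-dependent one. -/
def liftQI {N : ℕ} (pb : ChannelPolicy N) : QChannelPolicy N :=
  fun hist _ v => pb (hist.map fun x => (x.1, x.2.1)) v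

/-- A source policy is work-conserving if it never selects a source with an empty queue
(i.e. never transmits a dummy packet) while some source has an undelivered data packet. -/
def WorkConserving {M : ℕ} (pa : SourcePolicy M) : Prop :=
  ∀ (L : List (SrcObs M)) (o : SrcObs M),
    (∃ m, (o.queue m).isSome) → (o.queue (pa (L ++ [o]))).isSome

/-- The state of the network at the end of a slot:  `tau m` is the generation time of the
latest packet of source `m` delivered to the destination, `queue m` is the generation time
of the freshest undelivered packet of source `m` (if any), `chHist` records
(selected channel, observed state, system-empty flag) for every elapsed slot, `srcHist`
records the source observations of every elapsed slot, and `selCh`, `selSrc`, `emp` are the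
channel and source selected in, and the empty-system indicator `E(t)` of, the last slot. -/
structure State (M N : ℕ) where
  tau : Fin M → ℕ
  queue : Fin M → Option ℕ
  chHist : List (Fin N × Bool × Bool)
  srcHist : List (SrcObs M)
  selCh : Fin N
  selSrc : Fin M
  emp : Bool

variable {M N : ℕ} [NeZero M] [NeZero N]

/-- Initial state (before slot `1`): `τ_m = 0`, all queues empty. -/
def initState (M N : ℕ) [NeZero M] [NeZero N] : State M N :=
  ⟨fun _ => 0, fun _ => none, [], [], 0, 0, true⟩

open scoped Classical in
/-- One slot of the dynamics.  At the beginning of slot `t`, packet generations `a` refresh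
the queues; the source selector and the channel policy make their selections; the selected
channel is ON iff `u ≤ mu nsel` (coupled channel states); on a successful transmission of a
data packet, `τ` is updated to the generation time of the delivered packet and the packet
leaves its queue. -/
noncomputable def step (mu : Fin N → ℝ) (sel : List (SrcObs M) → Fin M)
    (pb : QChannelPolicy N) (t : ℕ) (a : Fin M → Bool) (u v : ℝ) (s : State M N) :
    State M N :=
  let q1 : Fin M → Option ℕ := fun m => if a m then some t else s.queue m
  let obs : SrcObs M := ⟨a, fun m => t - s.tau m, q1⟩
  let srcHist := s.srcHist ++ [obs]
  let empty : Bool := decide (∀ m, q1 m = none)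
  let msel := sel srcHist
  let nsel := pb s.chHist empty v
  let isOn : Bool := decide (u ≤ mu nsel)
  let chHist := s.chHist ++ [(nsel, isOn, empty)]
  match isOn, q1 msel with
  | true, some g =>
      ⟨Function.update s.tau msel g, Function.update q1 msel none,
        chHist, srcHist, nsel, msel, empty⟩
  | _, _ => ⟨s.tau, q1, chHist, srcHist, nsel, msel, empty⟩

/-- The state at the end of slot `t`, starting from the empty initial state, given the
per-slot source selector `sel`, the queue-dependent channel policy `pb`, the packet
generation stream `a`, the channel-coupling stream `u` and the policy-randomization
stream `v`. -/
noncomputable def run (mu : Fin N → ℝ) (sel : ℕ → List (SrcObs M) → Fin M)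
    (pb : QChannelPolicy N) (a : ℕ → Fin M → Bool) (u v : ℕ → ℝ) : ℕ → State M N
  | 0 => initState M N
  | t + 1 => step mu (sel (t + 1)) pb (t + 1) (a (t + 1)) (u (t + 1)) (v (t + 1))
      (run mu sel pb a u v t)

/-! ### Probabilistic model -/

/-- Index of the independent sources of randomness: the channel-coupling uniforms `U t`,
the policy-randomization uniforms `V t`, and the packet generations `A t m`. -/
inductive Idx (M : ℕ) where
  | u : ℕ → Idx M
  | v : ℕ → Idx M
  | a : ℕ → Fin M → Idx M

/-- Value type of each randomness source. -/
def IdxType {M : ℕ} : Idx M → Type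
  | .u _ => ℝ
  | .v _ => ℝ
  | .a _ _ => Bool

instance {M : ℕ} : ∀ i : Idx M, MeasurableSpace (IdxType i)
  | .u _ => (inferInstance : MeasurableSpace ℝ)
  | .v _ => (inferInstance : MeasurableSpace ℝ)
  | .a _ _ => (inferInstance : MeasurableSpace Bool)

/-- The family of all randomness sources, as a dependent family of random variables. -/
def family {Ω : Type*} {M : ℕ} (U V : ℕ → Ω → ℝ) (A : ℕ → Fin M → Ω → Bool) :
    ∀ i : Idx M, Ω → IdxType i
  | .u t => U t
  | .v t => V t
  | .a t m => A t m

/-- A network configuration `(λ, μ⃗)` together with its underlying probability space and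
primitive random processes: `U t` (channel coupling) and `V t` (policy randomization) are
i.i.d. uniform on `[0,1]`, `A t m` are i.i.d. Bernoulli(`λ`) packet generations, and all of
them are mutually independent.  Channel `n` is ON in slot `t` iff `U t ≤ mu n`, so that
`P(channel n ON) = mu n`, i.i.d. over time, and the channel states are coupled
monotonically across channels. -/
structure Config (M N : ℕ) : Type 1 where
  (lam : ℝ)
  (mu : Fin N → ℝ)
  (Ω : Type)
  [mΩ : MeasurableSpace Ω]
  (P : Measure Ω)
  (probP : IsProbabilityMeasure P)
  (U : ℕ → Ω → ℝ)
  (V : ℕ → Ω → ℝ)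
  (A : ℕ → Fin M → Ω → Bool)
  (lam_mem : lam ∈ Set.Ioo (0 : ℝ) 1)
  (mu_mem : ∀ n, mu n ∈ Set.Ioc (0 : ℝ) 1)
  (U_meas : ∀ t, Measurable (U t))
  (V_meas : ∀ t, Measurable (V t))
  (A_meas : ∀ t m, Measurable (A t m))
  (U_unif : ∀ t, P.map (U t) = volume.restrict (Set.Icc (0 : ℝ) 1))
  (V_unif : ∀ t, P.map (V t) = volume.restrict (Set.Icc (0 : ℝ) 1))
  (A_bern : ∀ t m, P {ω | A t m ω = true} = ENNReal.ofReal lam)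
  (indep : iIndepFun (family U V A) P)

attribute [instance] Config.mΩ Config.probP

/-- The trajectory of the network under configuration `cfg`, per-slot source selector `sel`
and channel policy `pb`, on the sample path `ω`. -/
noncomputable def Config.run (cfg : Config M N) (sel : ℕ → List (SrcObs M) → Fin M)
    (pb : QChannelPolicy N) (ω : cfg.Ω) : ℕ → State M N :=
  AgingBandits.run cfg.mu sel pb (fun t m => cfg.A t m ω) (fun t => cfg.U t ω)
    (fun t => cfg.V t ω)

/-- The AoI `h_m(t) = t - τ_m(t)` of source `m` at (the beginning of) slot `t` under the
learning algorithm `(pa, pb)`. -/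
noncomputable def Config.age (cfg : Config M N) (pa : SourcePolicy M)
    (pb : QChannelPolicy N) (ω : cfg.Ω) (t : ℕ) (m : Fin M) : ℕ :=
  t - (cfg.run (fun _ L => pa L) pb ω (t - 1)).tau m

/-- The channel `n(t)` selected in slot `t` by the learning algorithm `(pa, pb)`. -/
noncomputable def Config.chan (cfg : Config M N) (pa : SourcePolicy M)
    (pb : QChannelPolicy N) (ω : cfg.Ω) (t : ℕ) : Fin N :=
  (cfg.run (fun _ L => pa L) pb ω t).selCh

/-- The expected total AoI `E[Σ_{m=1}^M Σ_{t=1}^T h_m(t)]` of the learning algorithm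
`(pa, pb)`. -/
noncomputable def Config.expTotalAge (cfg : Config M N) (pa : SourcePolicy M)
    (pb : QChannelPolicy N) (T : ℕ) : ℝ :=
  ∑ m : Fin M, ∑ t ∈ Finset.Icc 1 T, ∫ ω, (cfg.age pa pb ω t m : ℝ) ∂cfg.P

/-- The channel policy of the optimal (genie) algorithm `π*`: select the channel `n*` of
highest reliability in every slot. -/
def optChannel (N : ℕ) (nstar : Fin N) : QChannelPolicy N := fun _ _ _ => nstar

/-- The AoI regret `R^π(T)` of the algorithm `π = (pa, pb)` relative to the optimal
algorithm `π* = (paStar, n*)`. -/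
noncomputable def Config.regret (cfg : Config M N) (nstar : Fin N)
    (paStar pa : SourcePolicy M) (pb : QChannelPolicy N) (T : ℕ) : ℝ :=
  cfg.expTotalAge pa pb T - cfg.expTotalAge paStar (optChannel N nstar) T

/-- The expected number of suboptimal channel choices
`E[K^π(T)] = Σ_{t=1}^T P(n(t) ≠ n*)` of the algorithm `(pa, pb)`. -/
noncomputable def Config.expSubopt (cfg : Config M N) (nstar : Fin N)
    (pa : SourcePolicy M) (pb : QChannelPolicy N) (T : ℕ) : ℝ :=
  ∑ t ∈ Finset.Icc 1 T, (cfg.P {ω | cfg.chan pa pb ω t ≠ nstar}).toReal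

end AgingBandits

namespace AgingBandits

/-- Empirical reliability estimate `μ̂_n` of channel `n` computed from the observation
history: the average of the observed states of channel `n` over the exploration slots
(slots in which the system was empty and a dummy packet was transmitted); `0` if channel
`n` has not been explored yet. -/
noncomputable def estimate {N : ℕ} (hist : List (Fin N × Bool × Bool)) (n : Fin N) : ℝ :=
  let obs := hist.filterMap fun x => if x.1 = n ∧ x.2.2 = true then some x.2.1 else none
  if obs.length = 0 then 0 else (obs.count true : ℝ) / obs.length

/-- The queue-dependent channel policy `η̄_b` of the order-optimal learning algorithm
(Algorithm 2): when the system is empty, select a channel uniformly at random (using the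
fresh uniform seed `v`) and use the transmitted dummy packet to update the empirical
estimates; when the system is nonempty, select the channel with the highest current
empirical estimate. -/
noncomputable def etabarB (N : ℕ) [NeZero N] : QChannelPolicy N :=
  fun hist empty v =>
    if empty then ⟨⌊v * N⌋₊ % N, Nat.mod_lt _ (Nat.pos_of_ne_zero (NeZero.ne N))⟩
    else ((List.finRange N).argmax (estimate hist)).getD
      ⟨0, Nat.pos_of_ne_zero (NeZero.ne N)⟩

variable {M N : ℕ} [NeZero M] [NeZero N]

/-- The trajectory of the optimal algorithm `π* = (paStar, n*)`. -/
noncomputable def Config.optRun (cfg : Config M N) (paStar : SourcePolicy M)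
    (nstar : Fin N) (ω : cfg.Ω) : ℕ → State M N :=
  cfg.run (fun _ L => paStar L) (optChannel N nstar) ω

/-- The trajectory of the auxiliary algorithm `η̂`: in every slot `t` it selects the same
source `m*(t)` as the optimal algorithm `π*` (transmitting a dummy packet if that source's
queue is empty) and the channel chosen by the policy `η̄_b`. -/
noncomputable def Config.auxRun (cfg : Config M N) (paStar : SourcePolicy M)
    (nstar : Fin N) (ω : cfg.Ω) : ℕ → State M N :=
  cfg.run (fun t _ => (cfg.optRun paStar nstar ω t).selSrc) (etabarB N) ω

/-- The AoI `h^η̂_m(t)` of source `m` at slot `t` under the auxiliary algorithm `η̂`. -/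
noncomputable def Config.auxAge (cfg : Config M N) (paStar : SourcePolicy M)
    (nstar : Fin N) (ω : cfg.Ω) (t : ℕ) (m : Fin M) : ℕ :=
  t - (cfg.auxRun paStar nstar ω (t - 1)).tau m

/-- The AoI `h^{π*}_m(t)` of source `m` at slot `t` under the optimal algorithm `π*`. -/
noncomputable def Config.optAge (cfg : Config M N) (paStar : SourcePolicy M)
    (nstar : Fin N) (ω : cfg.Ω) (t : ℕ) (m : Fin M) : ℕ :=
  t - (cfg.optRun paStar nstar ω (t - 1)).tau m

/-- The first slot `s_p` of the `p`-th period (`p ≥ 1`) of the trajectory of the auxiliary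
algorithm `η̂`: `s_1 = 1`, and `s_{p+1}` is the next slot `t` at which the system becomes
empty, i.e. `E(t-1) = 0` and `E(t) = 1`. -/
noncomputable def Config.periodStart (cfg : Config M N) (paStar : SourcePolicy M)
    (nstar : Fin N) (ω : cfg.Ω) : ℕ → ℕ
  | 0 => 0
  | 1 => 1
  | p + 2 =>
      sInf {t | cfg.periodStart paStar nstar ω (p + 1) < t ∧
        (cfg.auxRun paStar nstar ω (t - 1)).emp = false ∧
        (cfg.auxRun paStar nstar ω t).emp = true}

/-- The last slot `f_p = s_{p+1} - 1` of the `p`-th period. -/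
noncomputable def Config.periodEnd (cfg : Config M N) (paStar : SourcePolicy M)
    (nstar : Fin N) (ω : cfg.Ω) (p : ℕ) : ℕ :=
  cfg.periodStart paStar nstar ω (p + 1) - 1

/-- The channel `n̄(p)` used by the policy `η̄_b` throughout the nonempty phase of period
`p`: the channel selected at the first nonempty slot of period `p` (the estimates, and
hence the selected channel, do not change during a nonempty phase). -/
noncomputable def Config.nbar (cfg : Config M N) (paStar : SourcePolicy M)
    (nstar : Fin N) (ω : cfg.Ω) (p : ℕ) : Fin N :=
  (cfg.auxRun paStar nstar ω
    (sInf {t | cfg.periodStart paStar nstar ω p ≤ t ∧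
      (cfg.auxRun paStar nstar ω t).emp = false})).selCh

/-- The cumulative AoI `y^η̂_m(p) = Σ_{t=s_p}^{f_p} h^η̂_m(t)` of source `m` during period
`p` under the auxiliary algorithm `η̂`. -/
noncomputable def Config.periodAge (cfg : Config M N) (paStar : SourcePolicy M)
    (nstar : Fin N) (ω : cfg.Ω) (p : ℕ) (m : Fin M) : ℕ :=
  ∑ t ∈ Finset.Icc (cfg.periodStart paStar nstar ω p) (cfg.periodEnd paStar nstar ω p),
    cfg.auxAge paStar nstar ω t m

end AgingBandits

/-!
Both algorithms serve the same source in every slot, and whenever the channel chosen by `η̂`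
is ON so is `n*` (the channel states are coupled through `U`); by induction on slots,
`τ^η̂_m ≤ τ^{π*}_m` at all times. A period starts when the queues of `η̂` are empty, i.e. when
the freshest packet of every source has been delivered under `η̂`; then `τ^η̂_m` is the latest
generation time of source `m`, which also bounds `τ^{π*}_m` from above.
-/

namespace AgingBandits

variable {M N : ℕ}

def latestArrival (a : ℕ → Fin M → Bool) (m : Fin M) : ℕ → ℕ
  | 0 => 0
  | t + 1 => if a (t + 1) m then t + 1 else latestArrival a m t

lemma latestArrival_le (a : ℕ → Fin M → Bool) (m : Fin M) : ∀ t, latestArrival a m t ≤ t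
  | 0 => le_rfl
  | t + 1 => by
    unfold latestArrival
    split
    · exact le_rfl
    · exact (latestArrival_le a m t).trans t.le_succ

lemma latestArrival_le_succ (a : ℕ → Fin M → Bool) (m : Fin M) (t : ℕ) :
    latestArrival a m t ≤ latestArrival a m (t + 1) := by
  rw [latestArrival]
  split
  · exact (latestArrival_le a m t).trans t.le_succ
  · exact le_rfl

def refreshQueue (a : Fin M → Bool) (t : ℕ) (s : State M N) (m : Fin M) : Option ℕ :=
  if a m then some t else s.queue m

section Step

variable (mu : Fin N → ℝ) (sel : List (SrcObs M) → Fin M) (pb : QChannelPolicy N) (t : ℕ)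
  (a : Fin M → Bool) (u v : ℝ) (s : State M N)

lemma step_emp :
    (step mu sel pb t a u v s).emp = decide (∀ m, refreshQueue a t s m = none) := by
  unfold step
  dsimp only
  split <;> rfl

lemma step_selSrc :
    (step mu sel pb t a u v s).selSrc =
      sel (s.srcHist ++ [⟨a, fun m => t - s.tau m, refreshQueue a t s⟩]) := by
  unfold step
  dsimp only
  split <;> rfl

lemma step_selCh :
    (step mu sel pb t a u v s).selCh =
      pb s.chHist (decide (∀ m, refreshQueue a t s m = none)) v := by
  unfold step
  dsimp only
  split <;> rfl

lemma step_tau_and_queue (m : Fin M) :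
    let s' := step mu sel pb t a u v s
    s'.tau m = (if m = s'.selSrc ∧ u ≤ mu s'.selCh
      then (refreshQueue a t s m).getD (s.tau m) else s.tau m) ∧
    s'.queue m = if m = s'.selSrc ∧ u ≤ mu s'.selCh then none else refreshQueue a t s m := by
  intro s'
  simp only [s', step_selSrc, step_selCh]
  unfold step refreshQueue
  dsimp only
  -- `pb _` is a function only after unfolding `QChannelPolicy`, which blocks rewriting under it
  generalize pb s.chHist (decide (∀ m, (if a m = true then some t else s.queue m) = none)) v = n
  generalize sel (s.srcHist ++ [⟨a, fun m => t - s.tau m,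
    fun m => if a m = true then some t else s.queue m⟩]) = k
  split
  · next g hOn hq =>
    rw [decide_eq_true_iff] at hOn
    by_cases hm : m = k
    · subst hm; simp_all
    · simp_all
  · next hno =>
    by_cases hm : m = k ∧ u ≤ mu n
    · obtain ⟨rfl, hOn⟩ := hm
      have hq : (if a m = true then some t else s.queue m) = none :=
        Option.eq_none_iff_forall_ne_some.mpr fun g => hno g (decide_eq_true hOn)
      simp [hOn, hq]
    · rw [if_neg hm, if_neg hm]
      exact ⟨rfl, rfl⟩

lemma step_tau (m : Fin M) :
    (step mu sel pb t a u v s).tau m =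
      if m = (step mu sel pb t a u v s).selSrc ∧ u ≤ mu (step mu sel pb t a u v s).selCh
      then (refreshQueue a t s m).getD (s.tau m) else s.tau m :=
  (step_tau_and_queue mu sel pb t a u v s m).1

lemma step_queue (m : Fin M) :
    (step mu sel pb t a u v s).queue m =
      if m = (step mu sel pb t a u v s).selSrc ∧ u ≤ mu (step mu sel pb t a u v s).selCh
      then none else refreshQueue a t s m :=
  (step_tau_and_queue mu sel pb t a u v s m).2

lemma queue_eq_none_of_step_emp (h : (step mu sel pb t a u v s).emp = true) (m : Fin M) :
    s.queue m = none := by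
  rw [step_emp, decide_eq_true_iff] at h
  have hm := h m
  unfold refreshQueue at hm
  split_ifs at hm
  exact hm

end Step

-- The queue of `m` holds the latest arrival of `m`, or is empty and `τ_m` equals it.
def TracksArrivals (a : ℕ → Fin M → Bool) (t : ℕ) (s : State M N) : Prop :=
  ∀ m, s.tau m ≤ latestArrival a m t ∧ (s.queue m).getD (s.tau m) = latestArrival a m t

section TracksArrivals

variable {a : ℕ → Fin M → Bool} {t : ℕ} {s : State M N}

lemma TracksArrivals.tau_eq_of_queue_eq_none (h : TracksArrivals a t s) {m : Fin M}
    (hq : s.queue m = none) : s.tau m = latestArrival a m t := by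
  simpa [hq] using (h m).2

lemma TracksArrivals.refreshQueue_getD (h : TracksArrivals a t s) (m : Fin M) :
    (refreshQueue (a (t + 1)) (t + 1) s m).getD (s.tau m) = latestArrival a m (t + 1) := by
  rw [refreshQueue, latestArrival]
  split_ifs
  · rfl
  · exact (h m).2

lemma TracksArrivals.tau_le_succ (h : TracksArrivals a t s) (m : Fin M) :
    s.tau m ≤ latestArrival a m (t + 1) :=
  (h m).1.trans (latestArrival_le_succ a m t)

lemma TracksArrivals.step (h : TracksArrivals a t s) (mu : Fin N → ℝ)
    (sel : List (SrcObs M) → Fin M) (pb : QChannelPolicy N) (u v : ℝ) :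
    TracksArrivals a (t + 1) (step mu sel pb (t + 1) (a (t + 1)) u v s) := by
  intro m
  rw [step_tau, step_queue]
  split_ifs
  · exact ⟨(h.refreshQueue_getD m).le, h.refreshQueue_getD m⟩
  · exact ⟨h.tau_le_succ m, h.refreshQueue_getD m⟩

end TracksArrivals

lemma tracksArrivals_run [NeZero M] [NeZero N] (mu : Fin N → ℝ)
    (sel : ℕ → List (SrcObs M) → Fin M) (pb : QChannelPolicy N) (a : ℕ → Fin M → Bool)
    (u v : ℕ → ℝ) : ∀ t, TracksArrivals a t (run mu sel pb a u v t)
  | 0 => fun _ => ⟨le_rfl, rfl⟩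
  | t + 1 =>
    (tracksArrivals_run mu sel pb a u v t).step mu (sel (t + 1)) pb (u (t + 1)) (v (t + 1))

lemma step_tau_le_step_tau {mu : Fin N → ℝ} {selA selB : List (SrcObs M) → Fin M}
    {pbA pbB : QChannelPolicy N} {a : ℕ → Fin M → Bool} {t : ℕ} {u vA vB : ℝ}
    {sA sB : State M N} (hA : TracksArrivals a t sA) (hB : TracksArrivals a t sB)
    (hle : ∀ m, sA.tau m ≤ sB.tau m)
    (hsrc : (step mu selA pbA (t + 1) (a (t + 1)) u vA sA).selSrc =
      (step mu selB pbB (t + 1) (a (t + 1)) u vB sB).selSrc)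
    (hch : mu (step mu selA pbA (t + 1) (a (t + 1)) u vA sA).selCh ≤
      mu (step mu selB pbB (t + 1) (a (t + 1)) u vB sB).selCh) (m : Fin M) :
    (step mu selA pbA (t + 1) (a (t + 1)) u vA sA).tau m ≤
      (step mu selB pbB (t + 1) (a (t + 1)) u vB sB).tau m := by
  rw [step_tau, step_tau, hA.refreshQueue_getD, hB.refreshQueue_getD, hsrc]
  split_ifs with hdA hdB hdB
  · exact le_rfl
  · exact absurd ⟨hdA.1, hdA.2.trans hch⟩ hdB
  · exact (hle m).trans (hB.tau_le_succ m)
  · exact hle m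

namespace Config

variable [NeZero M] [NeZero N] (cfg : Config M N) (paStar : SourcePolicy M) (nstar : Fin N)
  (ω : cfg.Ω)

lemma tracksArrivals_auxRun (t : ℕ) :
    TracksArrivals (fun t m => cfg.A t m ω) t (cfg.auxRun paStar nstar ω t) :=
  tracksArrivals_run _ _ _ _ _ _ t

lemma tracksArrivals_optRun (t : ℕ) :
    TracksArrivals (fun t m => cfg.A t m ω) t (cfg.optRun paStar nstar ω t) :=
  tracksArrivals_run _ _ _ _ _ _ t

lemma auxRun_succ_selSrc (t : ℕ) :
    (cfg.auxRun paStar nstar ω (t + 1)).selSrc = (cfg.optRun paStar nstar ω (t + 1)).selSrc :=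
  step_selSrc _ _ _ _ _ _ _ _

lemma optRun_succ_selCh (t : ℕ) : (cfg.optRun paStar nstar ω (t + 1)).selCh = nstar :=
  step_selCh _ _ _ _ _ _ _ _

lemma auxRun_tau_le_optRun_tau (hmu : ∀ n, cfg.mu n ≤ cfg.mu nstar) (t : ℕ) (m : Fin M) :
    (cfg.auxRun paStar nstar ω t).tau m ≤ (cfg.optRun paStar nstar ω t).tau m := by
  induction t generalizing m with
  | zero => exact le_rfl
  | succ t ih =>
    exact step_tau_le_step_tau (cfg.tracksArrivals_auxRun paStar nstar ω t)
      (cfg.tracksArrivals_optRun paStar nstar ω t) ih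
      (cfg.auxRun_succ_selSrc paStar nstar ω t)
      ((hmu _).trans_eq (congrArg cfg.mu (cfg.optRun_succ_selCh paStar nstar ω t).symm)) m

lemma auxRun_tau_eq_optRun_tau_of_queue_eq_none (hmu : ∀ n, cfg.mu n ≤ cfg.mu nstar)
    {t : ℕ} {m : Fin M} (hq : (cfg.auxRun paStar nstar ω t).queue m = none) :
    (cfg.auxRun paStar nstar ω t).tau m = (cfg.optRun paStar nstar ω t).tau m := by
  refine (cfg.auxRun_tau_le_optRun_tau paStar nstar ω hmu t m).antisymm ?_
  rw [(cfg.tracksArrivals_auxRun paStar nstar ω t).tau_eq_of_queue_eq_none hq]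
  exact (cfg.tracksArrivals_optRun paStar nstar ω t m).1

lemma auxAge_eq_optAge_of_emp (hmu : ∀ n, cfg.mu n ≤ cfg.mu nstar) {t : ℕ}
    (h : (cfg.auxRun paStar nstar ω t).emp = true) (m : Fin M) :
    cfg.auxAge paStar nstar ω t m = cfg.optAge paStar nstar ω t m := by
  cases t with
  | zero => simp [auxAge, optAge]
  | succ t =>
    simp only [auxAge, optAge, Nat.add_sub_cancel]
    rw [cfg.auxRun_tau_eq_optRun_tau_of_queue_eq_none paStar nstar ω hmu
      (queue_eq_none_of_step_emp _ _ _ _ _ _ _ _ h m)]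

lemma periodStart_eq_one_or_emp (p : ℕ) :
    cfg.periodStart paStar nstar ω p = 1 ∨
      (cfg.auxRun paStar nstar ω (cfg.periodStart paStar nstar ω p)).emp = true := by
  match p with
  | 0 => exact Or.inr rfl
  | 1 => exact Or.inl rfl
  | p + 2 =>
    right
    rw [periodStart]
    rcases Set.eq_empty_or_nonempty {t | cfg.periodStart paStar nstar ω (p + 1) < t ∧
        (cfg.auxRun paStar nstar ω (t - 1)).emp = false ∧
        (cfg.auxRun paStar nstar ω t).emp = true} with hS | hS
    · rw [hS, Nat.sInf_empty]
      rfl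
    · exact (Nat.sInf_mem hS).2.2

end Config

theorem period_start_age_equal_general
    {M N : ℕ} [NeZero M] [NeZero N]
    (cfg : Config M N) (nstar : Fin N)
    (hstar : ∀ n, n ≠ nstar → cfg.mu n < cfg.mu nstar)
    (paStar : SourcePolicy M)
    (ω : cfg.Ω) (p : ℕ) (m : Fin M) :
    cfg.auxAge paStar nstar ω (cfg.periodStart paStar nstar ω p) m =
      cfg.optAge paStar nstar ω (cfg.periodStart paStar nstar ω p) m := by
  have hmu : ∀ n, cfg.mu n ≤ cfg.mu nstar := fun n => by
    rcases eq_or_ne n nstar with rfl | hn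
    exacts [le_rfl, (hstar n hn).le]
  rcases cfg.periodStart_eq_one_or_emp paStar nstar ω p with h | h
  · rw [h]
    rfl
  · exact cfg.auxAge_eq_optAge_of_emp paStar nstar ω hmu h m

/-- **Equality of AoI at the start of every period (Lemma A.2 / proof of Lemma 4).**
At the first slot `s_p` of every period `p ≥ 1`, the AoI under the auxiliary algorithm `η̂`
equals the AoI under the optimal algorithm `π*` for every source `m`:
`h^η̂_m(s_p) = h^{π*}_m(s_p)`. -/
theorem period_start_age_equal
    {M N : ℕ} [NeZero M] [NeZero N] (hM : 1 ≤ M) (hN : 2 ≤ N)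
    (cfg : Config M N) (nstar : Fin N)
    (hstar : ∀ n, n ≠ nstar → cfg.mu n < cfg.mu nstar)
    (paStar : SourcePolicy M) (hWCstar : WorkConserving paStar)
    (ω : cfg.Ω) (p : ℕ) (hp : 1 ≤ p) (m : Fin M) :
    cfg.auxAge paStar nstar ω (cfg.periodStart paStar nstar ω p) m =
      cfg.optAge paStar nstar ω (cfg.periodStart paStar nstar ω p) m :=
  period_start_age_equal_general cfg nstar hstar paStar ω p m

end AgingBandits
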